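/- Fix ω₁, ω₂ ∈ ℂ∖{0} with Im(ω₁/ω₂) > 0, set q = exp(πiω₁/ω₂), q̃ = exp(πiω₂/ω₁), let g > 0, write g^w := exp(w·ln g), and fix λ ∈ ℂ. Let 𝒮(z) = (∏_{m=0}^∞ (1 − q^{2m}·e^{2πiz/ω₂})) / (∏_{m=1}^∞ (1 − q̃^{−2m}·e^{2πiz/ω₁})), and define the Whittaker vector Φ¹(t) = 𝒮(−it + ω₁ + ω₂ + λ/2 − (iω₁ω₂/(2π))·ln g)⁻¹. Then for every t ∈ ℂ at which 𝒮 is defined (denominator factors nonzero) and nonvanishing at the three arguments involved, Φ¹ satisfies the pair of dual difference equations: (1 − g^{ω₁}·e^{2πt/ω₂ + πiλ/ω₂})·Φ¹(t − iω₁) = Φ¹(t) and (1 − g^{ω₂}·e^{2πt/ω₁ + πiλ/ω₁})·Φ¹(t − iω₂) = Φ¹(t). -/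

import Mathlib

/-- `qparam ω₁ ω₂ = exp(πi·ω₁/ω₂)`; then `q = qparam ω₁ ω₂` and
`q̃ = qparam ω₂ ω₁`. -/
noncomputable def qparam (ω₁ ω₂ : ℂ) : ℂ :=
  Complex.exp ((Real.pi : ℂ) * Complex.I * ω₁ / ω₂)

/-- The function `𝒮(z) = ∏_{m≥0}(1 − q^{2m}·e^{2πiz/ω₂}) / ∏_{m≥1}(1 − q̃^{−2m}·e^{2πiz/ω₁})`. -/
noncomputable def Sfun (ω₁ ω₂ z : ℂ) : ℂ :=
  (∏' m : ℕ, (1 - qparam ω₁ ω₂ ^ (2 * m) *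
      Complex.exp (2 * (Real.pi : ℂ) * Complex.I * z / ω₂))) /
  (∏' m : ℕ, (1 - qparam ω₂ ω₁ ^ (-(2 * ((m : ℤ) + 1))) *
      Complex.exp (2 * (Real.pi : ℂ) * Complex.I * z / ω₁)))

/-- The numerator infinite product of `𝒮` at `z`. -/
noncomputable def SnumProd (ω₁ ω₂ z : ℂ) : ℂ :=
  ∏' m : ℕ, (1 - qparam ω₁ ω₂ ^ (2 * m) *
    Complex.exp (2 * (Real.pi : ℂ) * Complex.I * z / ω₂))

/-- `𝒮` is defined (all denominator factors nonzero) and nonvanishing at `z`. -/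
def SDefinedNeZero (ω₁ ω₂ z : ℂ) : Prop :=
  (∀ m : ℕ, 1 ≤ m →
    1 - qparam ω₂ ω₁ ^ (-(2 * (m : ℤ))) *
      Complex.exp (2 * (Real.pi : ℂ) * Complex.I * z / ω₁) ≠ 0) ∧
  SnumProd ω₁ ω₂ z ≠ 0

/-- The argument of `𝒮` in the Whittaker vector `Φ¹`:
`−it + ω₁ + ω₂ + λ/2 − (iω₁ω₂/(2π))·ln g`. -/
noncomputable def phi1Arg (ω₁ ω₂ : ℂ) (g : ℝ) (lam t : ℂ) : ℂ :=
  -(Complex.I * t) + ω₁ + ω₂ + lam / 2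
    - Complex.I * ω₁ * ω₂ / (2 * (Real.pi : ℂ)) * (Real.log g : ℂ)

/-- The Whittaker vector `Φ¹(t) = 𝒮(−it + ω₁ + ω₂ + λ/2 − (iω₁ω₂/(2π))·ln g)⁻¹`. -/
noncomputable def Phi1 (ω₁ ω₂ : ℂ) (g : ℝ) (lam t : ℂ) : ℂ :=
  (Sfun ω₁ ω₂ (phi1Arg ω₁ ω₂ g lam t))⁻¹

open Complex

/-! The numerator and the denominator of `𝒮` are infinite `q`-Pochhammer symbols in
`e^{2πiz/ω₂}` and `e^{2πiz/ω₁}`, with bases `q²` and `q̃⁻²` of modulus `< 1`. Shifting `z` by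
`ω₁` fixes `e^{2πiz/ω₁}` and divides `e^{2πiz/ω₂}` by `q²`, which splits off the first factor of
the numerator; shifting by `ω₂` does the same to the denominator. At the argument of `Φ¹` the
split-off factor is exactly the coefficient of the difference equation. -/

section qPochhammer

variable {𝕜 : Type*} [NormedField 𝕜] [CompleteSpace 𝕜]

/-- The infinite `q`-Pochhammer symbol `(c; q)_∞`. -/
noncomputable def qPochhammer (c q : 𝕜) : 𝕜 :=
  ∏' m : ℕ, (1 - q ^ m * c)

theorem multipliable_one_sub_pow_mul {q : 𝕜} (hq : ‖q‖ < 1) (c : 𝕜) :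
    Multipliable fun m : ℕ => 1 - q ^ m * c := by
  simp_rw [sub_eq_add_neg]
  refine multipliable_one_add_of_summable ?_
  simpa [norm_mul, norm_pow] using
    (summable_geometric_of_lt_one (norm_nonneg q) hq).mul_right ‖c‖

theorem qPochhammer_eq_one_sub_mul {q : 𝕜} (hq : ‖q‖ < 1) (c : 𝕜) :
    qPochhammer c q = (1 - c) * qPochhammer (q * c) q := by
  have hshift : (fun m : ℕ => 1 - q ^ (m + 1) * c) = fun m : ℕ => 1 - q ^ m * (q * c) := by
    funext m; rw [pow_succ, mul_assoc, mul_comm q]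
  have htail : Multipliable fun m : ℕ => 1 - q ^ (m + 1) * c := by
    rw [hshift]; exact multipliable_one_sub_pow_mul hq (q * c)
  rw [qPochhammer, tprod_eq_zero_mul' (f := fun m : ℕ => 1 - q ^ m * c) htail, hshift,
    pow_zero, one_mul, qPochhammer]

end qPochhammer

theorem norm_qparam (ω ω' : ℂ) : ‖qparam ω ω'‖ = Real.exp (-(Real.pi * (ω / ω').im)) := by
  rw [qparam, norm_exp, mul_div_assoc]
  simp [mul_re]

theorem norm_qparam_lt_one {ω ω' : ℂ} (h : 0 < (ω / ω').im) : ‖qparam ω ω'‖ < 1 := by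
  rw [norm_qparam, Real.exp_lt_one_iff, neg_lt_zero]
  exact mul_pos Real.pi_pos h

theorem norm_qparam_sq_lt_one {ω ω' : ℂ} (h : 0 < (ω / ω').im) : ‖qparam ω ω' ^ 2‖ < 1 := by
  rw [norm_pow]
  exact pow_lt_one₀ (norm_nonneg _) (norm_qparam_lt_one h) two_ne_zero

theorem inv_qparam (ω ω' : ℂ) : (qparam ω ω')⁻¹ = qparam (-ω) ω' := by
  rw [qparam, qparam, ← exp_neg]
  ring_nf

theorem im_neg_div_pos_of_im_div_pos {ω ω' : ℂ} (h : 0 < (ω / ω').im) : 0 < (-ω' / ω).im := by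
  rw [neg_div, neg_im, ← inv_div, inv_im, neg_div, neg_neg]
  exact div_pos h (normSq_pos.mpr fun h0 => h.ne' (by rw [h0, zero_im]))

theorem norm_inv_qparam_sq_lt_one {ω ω' : ℂ} (h : 0 < (ω / ω').im) :
    ‖(qparam ω' ω ^ 2)⁻¹‖ < 1 := by
  rw [← inv_pow, inv_qparam]
  exact norm_qparam_sq_lt_one (im_neg_div_pos_of_im_div_pos h)

theorem qparam_sq (ω ω' : ℂ) :
    qparam ω ω' ^ 2 = exp (2 * Real.pi * I * ω / ω') := by
  rw [qparam, ← exp_nat_mul]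
  ring_nf

theorem qparam_self_sq {ω : ℂ} (hω : ω ≠ 0) : qparam ω ω ^ 2 = 1 := by
  rw [qparam_sq, mul_div_assoc, div_self hω, mul_one, exp_two_pi_mul_I]

noncomputable def periodicExp (ω z : ℂ) : ℂ :=
  exp (2 * Real.pi * I * z / ω)

theorem periodicExp_sub (ω ω' z : ℂ) :
    periodicExp ω (z - ω') = (qparam ω' ω ^ 2)⁻¹ * periodicExp ω z := by
  rw [periodicExp, periodicExp, qparam_sq, ← exp_neg, ← exp_add]
  ring_nf

theorem periodicExp_sub_self {ω : ℂ} (hω : ω ≠ 0) (z : ℂ) :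
    periodicExp ω (z - ω) = periodicExp ω z := by
  rw [periodicExp_sub, qparam_self_sq hω, inv_one, one_mul]

theorem SnumProd_eq_qPochhammer (ω₁ ω₂ z : ℂ) :
    SnumProd ω₁ ω₂ z = qPochhammer (periodicExp ω₂ z) (qparam ω₁ ω₂ ^ 2) :=
  tprod_congr fun m => by rw [← pow_mul, periodicExp]

theorem Sfun_eq_div_qPochhammer (ω₁ ω₂ z : ℂ) :
    Sfun ω₁ ω₂ z = SnumProd ω₁ ω₂ z /
      qPochhammer ((qparam ω₂ ω₁ ^ 2)⁻¹ * periodicExp ω₁ z) (qparam ω₂ ω₁ ^ 2)⁻¹ := by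
  refine congrArg (SnumProd ω₁ ω₂ z / ·) (tprod_congr fun m => ?_)
  rw [← mul_assoc, ← pow_succ, inv_pow, ← pow_mul, ← zpow_natCast, ← zpow_neg, periodicExp]
  push_cast
  ring_nf

theorem SnumProd_sub_left {ω₁ ω₂ : ℂ} (hq : ‖qparam ω₁ ω₂ ^ 2‖ < 1) (z : ℂ) :
    SnumProd ω₁ ω₂ (z - ω₁) =
      (1 - (qparam ω₁ ω₂ ^ 2)⁻¹ * periodicExp ω₂ z) * SnumProd ω₁ ω₂ z := by
  have hq₀ : qparam ω₁ ω₂ ^ 2 ≠ 0 := pow_ne_zero 2 (exp_ne_zero _)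
  rw [SnumProd_eq_qPochhammer, SnumProd_eq_qPochhammer, periodicExp_sub,
    qPochhammer_eq_one_sub_mul hq, mul_inv_cancel_left₀ hq₀]

theorem Sfun_sub_left {ω₁ ω₂ : ℂ} (hω₁ : ω₁ ≠ 0) (hq : ‖qparam ω₁ ω₂ ^ 2‖ < 1) (z : ℂ) :
    Sfun ω₁ ω₂ (z - ω₁) = (1 - (qparam ω₁ ω₂ ^ 2)⁻¹ * periodicExp ω₂ z) * Sfun ω₁ ω₂ z := by
  rw [Sfun_eq_div_qPochhammer, Sfun_eq_div_qPochhammer, SnumProd_sub_left hq z,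
    periodicExp_sub_self hω₁, mul_div_assoc]

theorem Sfun_sub_right {ω₁ ω₂ : ℂ} (hω₂ : ω₂ ≠ 0) (hq : ‖(qparam ω₂ ω₁ ^ 2)⁻¹‖ < 1) (z : ℂ) :
    Sfun ω₁ ω₂ z =
      Sfun ω₁ ω₂ (z - ω₂) / (1 - (qparam ω₂ ω₁ ^ 2)⁻¹ * periodicExp ω₁ z) := by
  rw [Sfun_eq_div_qPochhammer, Sfun_eq_div_qPochhammer, SnumProd_eq_qPochhammer,
    SnumProd_eq_qPochhammer, periodicExp_sub_self hω₂, periodicExp_sub,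
    qPochhammer_eq_one_sub_mul hq, div_div, mul_comm]

theorem phi1Arg_comm (ω₁ ω₂ : ℂ) (g : ℝ) (lam t : ℂ) :
    phi1Arg ω₁ ω₂ g lam t = phi1Arg ω₂ ω₁ g lam t := by
  unfold phi1Arg
  ring

theorem phi1Arg_sub_I_mul (ω₁ ω₂ : ℂ) (g : ℝ) (lam t ω : ℂ) :
    phi1Arg ω₁ ω₂ g lam (t - I * ω) = phi1Arg ω₁ ω₂ g lam t - ω := by
  unfold phi1Arg
  linear_combination ω * I_mul_I

theorem inv_qparam_sq_mul_periodicExp_phi1Arg {ω₂ : ℂ} (hω₂ : ω₂ ≠ 0) (ω₁ : ℂ) (g : ℝ)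
    (lam t : ℂ) :
    (qparam ω₁ ω₂ ^ 2)⁻¹ * periodicExp ω₂ (phi1Arg ω₁ ω₂ g lam t) =
      exp (ω₁ * Real.log g) * exp (2 * Real.pi * t / ω₂ + Real.pi * I * lam / ω₂) := by
  rw [qparam_sq, periodicExp, ← exp_neg, ← exp_add, ← exp_add]
  refine exp_eq_exp_iff_exists_int.mpr ⟨1, ?_⟩
  unfold phi1Arg
  field_simp
  push_cast
  linear_combination (-(ω₁ * ω₂ * Real.log g + 2 * Real.pi * t)) * I_mul_I

theorem whittaker_vector_Phi1_difference_equations_general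
    (ω₁ ω₂ : ℂ) (hω₁ : ω₁ ≠ 0) (hω₂ : ω₂ ≠ 0) (him : 0 < (ω₁ / ω₂).im)
    (g : ℝ) (lam t : ℂ)
    (h2 : SDefinedNeZero ω₁ ω₂ (phi1Arg ω₁ ω₂ g lam t - ω₁)) :
    (1 - Complex.exp (ω₁ * (Real.log g : ℂ)) *
          Complex.exp (2 * (Real.pi : ℂ) * t / ω₂ + (Real.pi : ℂ) * Complex.I * lam / ω₂)) *
        Phi1 ω₁ ω₂ g lam (t - Complex.I * ω₁) = Phi1 ω₁ ω₂ g lam t ∧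
    (1 - Complex.exp (ω₂ * (Real.log g : ℂ)) *
          Complex.exp (2 * (Real.pi : ℂ) * t / ω₁ + (Real.pi : ℂ) * Complex.I * lam / ω₁)) *
        Phi1 ω₁ ω₂ g lam (t - Complex.I * ω₂) = Phi1 ω₁ ω₂ g lam t := by
  have hq := norm_qparam_sq_lt_one him
  have hq' := norm_inv_qparam_sq_lt_one him
  constructor
  · have hfactor := left_ne_zero_of_mul (SnumProd_sub_left hq _ ▸ h2.2)
    rw [inv_qparam_sq_mul_periodicExp_phi1Arg hω₂] at hfactor
    rw [Phi1, Phi1, phi1Arg_sub_I_mul, Sfun_sub_left hω₁ hq,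
      inv_qparam_sq_mul_periodicExp_phi1Arg hω₂, mul_inv]
    exact mul_inv_cancel_left₀ hfactor _
  · rw [Phi1, Phi1, phi1Arg_sub_I_mul, Sfun_sub_right hω₂ hq' (phi1Arg ω₁ ω₂ g lam t), inv_div,
      phi1Arg_comm, inv_qparam_sq_mul_periodicExp_phi1Arg hω₁]
    exact (div_eq_mul_inv _ _).symm

/-- The Whittaker vector `Φ¹` satisfies the pair of dual difference equations
`(1 − g^{ω₁}·e^{2πt/ω₂ + πiλ/ω₂})·Φ¹(t − iω₁) = Φ¹(t)` and
`(1 − g^{ω₂}·e^{2πt/ω₁ + πiλ/ω₁})·Φ¹(t − iω₂) = Φ¹(t)`. -/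
theorem whittaker_vector_Phi1_difference_equations
    (ω₁ ω₂ : ℂ) (hω₁ : ω₁ ≠ 0) (hω₂ : ω₂ ≠ 0) (him : 0 < (ω₁ / ω₂).im)
    (g : ℝ) (hg : 0 < g) (lam t : ℂ)
    (h1 : SDefinedNeZero ω₁ ω₂ (phi1Arg ω₁ ω₂ g lam t))
    (h2 : SDefinedNeZero ω₁ ω₂ (phi1Arg ω₁ ω₂ g lam t - ω₁))
    (h3 : SDefinedNeZero ω₁ ω₂ (phi1Arg ω₁ ω₂ g lam t - ω₂)) :
    (1 - Complex.exp (ω₁ * (Real.log g : ℂ)) *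
          Complex.exp (2 * (Real.pi : ℂ) * t / ω₂ + (Real.pi : ℂ) * Complex.I * lam / ω₂)) *
        Phi1 ω₁ ω₂ g lam (t - Complex.I * ω₁) = Phi1 ω₁ ω₂ g lam t ∧
    (1 - Complex.exp (ω₂ * (Real.log g : ℂ)) *
          Complex.exp (2 * (Real.pi : ℂ) * t / ω₁ + (Real.pi : ℂ) * Complex.I * lam / ω₁)) *
        Phi1 ω₁ ω₂ g lam (t - Complex.I * ω₂) = Phi1 ω₁ ω₂ g lam t :=
  whittaker_vector_Phi1_difference_equations_general ω₁ ω₂ hω₁ hω₂ him g lam t h2
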